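/- Let λ ∈ σ_{π+}(A) with λ ≠ ∞ (respectively λ ∈ σ_{π−}(A), λ ≠ ∞). Then ker(A−λ) is an Almost Pontryagin space with finite rank of non-positivity (respectively non-negativity); that is, there exists a uniformly positive (respectively uniformly negative) closed subspace L̃ ⊆ ker(A−λ) whose codimension in ker(A−λ) is finite. -/

import Mathlib

open Filter Topology OnePoint Set

noncomputable section

namespace Paper

variable {H : Type*} [NormedAddCommGroup H] [InnerProductSpace ℂ H]

/-- The indefinite inner product `[x,y] := (Gx, y)` induced by the Gram operator `G`. -/
def brk (G : H →L[ℂ] H) (x y : H) : ℂ := inner ℂ (G x) y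

/-- The real part of `[x,y]`; note that `[x,x]` is real when `G` is selfadjoint. -/
def brkRe (G : H →L[ℂ] H) (x y : H) : ℝ := (brk G x y).re

/-- A linear manifold of finite codimension in `H`. -/
def FinCodim (M : Submodule ℂ H) : Prop := FiniteDimensional ℂ (H ⧸ M)

/-- An approximate eigensequence of `A` at the finite point `l`. -/
def IsApproxSeq (A : H →ₗ.[ℂ] H) (l : ℂ) (x : ℕ → A.domain) : Prop :=
  (∀ n, ‖(x n : H)‖ = 1) ∧
    Tendsto (fun n => A (x n) - l • ((x n : H))) atTop (𝓝 0)

/-- The approximate point spectrum of `A`. -/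
def sigmaAp (A : H →ₗ.[ℂ] H) : Set ℂ := {l | ∃ x : ℕ → A.domain, IsApproxSeq A l x}

/-- The type `π₊` condition at `l` relative to the linear manifold `M`. -/
def PiPlusCond (G : H →L[ℂ] H) (A : H →ₗ.[ℂ] H) (l : ℂ) (M : Submodule ℂ H) : Prop :=
  ∀ x : ℕ → A.domain, (∀ n, (x n : H) ∈ M) → IsApproxSeq A l x →
    0 < atTop.liminf (fun n => brkRe G (x n) (x n))

/-- The type `π₋` condition at `l` relative to the linear manifold `M`. -/
def PiMinusCond (G : H →L[ℂ] H) (A : H →ₗ.[ℂ] H) (l : ℂ) (M : Submodule ℂ H) : Prop :=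
  ∀ x : ℕ → A.domain, (∀ n, (x n : H) ∈ M) → IsApproxSeq A l x →
    atTop.limsup (fun n => brkRe G (x n) (x n)) < 0

/-- `l` is a spectral point of type `π₊` of `A`. -/
def sigmaPiPlusAt (G : H →L[ℂ] H) (A : H →ₗ.[ℂ] H) (l : ℂ) : Prop :=
  l ∈ sigmaAp A ∧ ∃ M : Submodule ℂ H, FinCodim M ∧ PiPlusCond G A l M

/-- `l` is a spectral point of type `π₋` of `A`. -/
def sigmaPiMinusAt (G : H →L[ℂ] H) (A : H →ₗ.[ℂ] H) (l : ℂ) : Prop :=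
  l ∈ sigmaAp A ∧ ∃ M : Submodule ℂ H, FinCodim M ∧ PiMinusCond G A l M

/-- `l` is a spectral point of positive type of `A`. -/
def sigmaPPAt (G : H →L[ℂ] H) (A : H →ₗ.[ℂ] H) (l : ℂ) : Prop :=
  l ∈ sigmaAp A ∧ PiPlusCond G A l ⊤

/-- `l` is a spectral point of negative type of `A`. -/
def sigmaMMAt (G : H →L[ℂ] H) (A : H →ₗ.[ℂ] H) (l : ℂ) : Prop :=
  l ∈ sigmaAp A ∧ PiMinusCond G A l ⊤

/-- An approximate eigensequence of `A` at `∞`. -/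
def IsInftyApproxSeq (A : H →ₗ.[ℂ] H) (x : ℕ → A.domain) : Prop :=
  (∀ n, ‖A (x n)‖ = 1) ∧ Tendsto (fun n => ((x n : H))) atTop (𝓝 0)

/-- `A` is a bounded operator. -/
def IsBoundedOp (A : H →ₗ.[ℂ] H) : Prop := ∃ C : ℝ, ∀ x : A.domain, ‖A x‖ ≤ C * ‖(x : H)‖

/-- The type `π₊` condition at `∞` relative to the linear manifold `M`. -/
def InftyPiPlusCond (G : H →L[ℂ] H) (A : H →ₗ.[ℂ] H) (M : Submodule ℂ H) : Prop :=
  ∀ x : ℕ → A.domain, (∀ n, (x n : H) ∈ M) → IsInftyApproxSeq A x →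
    0 < atTop.liminf (fun n => brkRe G (A (x n)) (A (x n)))

/-- The type `π₋` condition at `∞` relative to the linear manifold `M`. -/
def InftyPiMinusCond (G : H →L[ℂ] H) (A : H →ₗ.[ℂ] H) (M : Submodule ℂ H) : Prop :=
  ∀ x : ℕ → A.domain, (∀ n, (x n : H) ∈ M) → IsInftyApproxSeq A x →
    atTop.limsup (fun n => brkRe G (A (x n)) (A (x n))) < 0

/-- `∞` is a spectral point of type `π₊` of `A`. -/
def sigmaPiPlusInfty (G : H →L[ℂ] H) (A : H →ₗ.[ℂ] H) : Prop :=
  ¬ IsBoundedOp A ∧ ∃ M : Submodule ℂ H, FinCodim M ∧ InftyPiPlusCond G A M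

/-- `∞` is a spectral point of type `π₋` of `A`. -/
def sigmaPiMinusInfty (G : H →L[ℂ] H) (A : H →ₗ.[ℂ] H) : Prop :=
  ¬ IsBoundedOp A ∧ ∃ M : Submodule ℂ H, FinCodim M ∧ InftyPiMinusCond G A M

/-- `∞` is a spectral point of positive type of `A`. -/
def sigmaPPInfty (G : H →L[ℂ] H) (A : H →ₗ.[ℂ] H) : Prop :=
  ¬ IsBoundedOp A ∧ InftyPiPlusCond G A ⊤

/-- `∞` is a spectral point of negative type of `A`. -/
def sigmaMMInfty (G : H →L[ℂ] H) (A : H →ₗ.[ℂ] H) : Prop :=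
  ¬ IsBoundedOp A ∧ InftyPiMinusCond G A ⊤

/-- A subset of the Riemann sphere `ℂ̄ = ℂ ∪ {∞}` given by a condition at finite
points and a condition at `∞`. -/
def extSet (Pf : ℂ → Prop) (Pinf : Prop) : Set (OnePoint ℂ) :=
  {p | (∃ l : ℂ, p = (l : OnePoint ℂ) ∧ Pf l) ∨ (p = ∞ ∧ Pinf)}

/-- The extended approximate point spectrum `σ̃_ap(A) ⊆ ℂ̄`. -/
def extSigmaAp (A : H →ₗ.[ℂ] H) : Set (OnePoint ℂ) :=
  extSet (fun l => l ∈ sigmaAp A) (¬ IsBoundedOp A)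

/-- The set `σ_{π+}(A) ⊆ ℂ̄`. -/
def extPiPlus (G : H →L[ℂ] H) (A : H →ₗ.[ℂ] H) : Set (OnePoint ℂ) :=
  extSet (sigmaPiPlusAt G A) (sigmaPiPlusInfty G A)

/-- The set `σ_{π−}(A) ⊆ ℂ̄`. -/
def extPiMinus (G : H →L[ℂ] H) (A : H →ₗ.[ℂ] H) : Set (OnePoint ℂ) :=
  extSet (sigmaPiMinusAt G A) (sigmaPiMinusInfty G A)

/-- The set `σ_{++}(A) ⊆ ℂ̄`. -/
def extPP (G : H →L[ℂ] H) (A : H →ₗ.[ℂ] H) : Set (OnePoint ℂ) :=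
  extSet (sigmaPPAt G A) (sigmaPPInfty G A)

/-- The set `σ_{−−}(A) ⊆ ℂ̄`. -/
def extMM (G : H →L[ℂ] H) (A : H →ₗ.[ℂ] H) : Set (OnePoint ℂ) :=
  extSet (sigmaMMAt G A) (sigmaMMInfty G A)

/-- The extended set of points of regular type, `r̃(A) = ℂ̄ \ σ̃_ap(A)`. -/
def extReg (A : H →ₗ.[ℂ] H) : Set (OnePoint ℂ) := (extSigmaAp A)ᶜ

/-- `A` is `G`-symmetric: `[Ax,y] = [x,Ay]` for `x, y ∈ dom A`. -/
def GSymm (G : H →L[ℂ] H) (A : H →ₗ.[ℂ] H) : Prop :=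
  ∀ x y : A.domain, brk G (A x) (y : H) = brk G (x : H) (A y)

/-- A bounded operator `T` is `G`-symmetric (equivalently, `G`-selfadjoint):
`[Tx,y] = [x,Ty]` for all `x, y`. -/
def GSymmB (G T : H →L[ℂ] H) : Prop := ∀ x y : H, brk G (T x) y = brk G x (T y)

/-- `l ∈ ρ(A)`: the operator `A − l` maps `dom A` bijectively onto `H`
with a bounded inverse. -/
def InResolventSet (A : H →ₗ.[ℂ] H) (l : ℂ) : Prop :=
  (∀ y : H, ∃ x : A.domain, A x - l • (x : H) = y) ∧
  ∃ c : ℝ, 0 < c ∧ ∀ x : A.domain, c * ‖(x : H)‖ ≤ ‖A x - l • (x : H)‖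

/-- The spectrum `σ(A) = ℂ \ ρ(A)`. -/
def spectrumSet (A : H →ₗ.[ℂ] H) : Set ℂ := {l | ¬ InResolventSet A l}

/-- `ker (A − l)` as a submodule of `H`. -/
def kerAt (A : H →ₗ.[ℂ] H) (l : ℂ) : Submodule ℂ H where
  carrier := {x | ∃ hx : x ∈ A.domain, A ⟨x, hx⟩ = l • x}
  zero_mem' := ⟨A.domain.zero_mem, by
    have : (⟨(0 : H), A.domain.zero_mem⟩ : A.domain) = 0 := rfl
    rw [this, A.map_zero, smul_zero]⟩
  add_mem' := by
    rintro a b ⟨ha, ea⟩ ⟨hb, eb⟩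
    refine ⟨A.domain.add_mem ha hb, ?_⟩
    have : (⟨a + b, A.domain.add_mem ha hb⟩ : A.domain) = ⟨a, ha⟩ + ⟨b, hb⟩ := rfl
    rw [this, A.map_add, ea, eb, smul_add]
  smul_mem' := by
    rintro c x ⟨hx, ex⟩
    refine ⟨A.domain.smul_mem c hx, ?_⟩
    have : (⟨c • x, A.domain.smul_mem c hx⟩ : A.domain) = c • (⟨x, hx⟩ : A.domain) := rfl
    rw [this, A.map_smul, ex, smul_comm]

/-- The range of `A − l`. -/
def ranAt (A : H →ₗ.[ℂ] H) (l : ℂ) : Set H :=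
  {y | ∃ x : A.domain, A x - l • (x : H) = y}

/-- A uniformly positive subspace. -/
def IsUnifPos (G : H →L[ℂ] H) (L : Submodule ℂ H) : Prop :=
  ∃ δ : ℝ, 0 < δ ∧ ∀ x ∈ L, δ * ‖x‖ ^ 2 ≤ brkRe G x x

/-- A uniformly negative subspace. -/
def IsUnifNeg (G : H →L[ℂ] H) (L : Submodule ℂ H) : Prop :=
  ∃ δ : ℝ, 0 < δ ∧ ∀ x ∈ L, δ * ‖x‖ ^ 2 ≤ -brkRe G x x

/-- A positive set: every nonzero element `x` has `[x,x] > 0`. -/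
def IsPosSet (G : H →L[ℂ] H) (S : Set H) : Prop := ∀ x ∈ S, x ≠ 0 → 0 < brkRe G x x

/-- A negative set: every nonzero element `x` has `[x,x] < 0`. -/
def IsNegSet (G : H →L[ℂ] H) (S : Set H) : Prop := ∀ x ∈ S, x ≠ 0 → brkRe G x x < 0

/-- The orthogonal companion `L^{[⊥]}` of `L` with respect to `[·,·]`. -/
def orthCompanion (G : H →L[ℂ] H) (L : Submodule ℂ H) : Submodule ℂ H where
  carrier := {x | ∀ y ∈ L, brk G x y = 0}
  zero_mem' := by intro y hy; simp [brk]
  add_mem' := by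
    intro a b ha hb y hy
    simp only [brk, map_add, inner_add_left] at *
    rw [ha y hy, hb y hy, add_zero]
  smul_mem' := by
    intro c x hx y hy
    simp only [brk, _root_.map_smul, inner_smul_left] at *
    rw [hx y hy, mul_zero]

/-- The isotropic part `L° = L ∩ L^{[⊥]}` of `L`. -/
def isoPart (G : H →L[ℂ] H) (L : Submodule ℂ H) : Submodule ℂ H := L ⊓ orthCompanion G L

/-- A fundamental decomposition `L = L₊ [∔] L₋ [∔] L°` of `L`. -/
def IsFundDecomp (G : H →L[ℂ] H) (L Lp Lm L0 : Submodule ℂ H) : Prop :=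
  Lp ≤ L ∧ Lm ≤ L ∧ L0 = isoPart G L ∧
  IsPosSet G (Lp : Set H) ∧ IsNegSet G (Lm : Set H) ∧
  (∀ x ∈ Lp, ∀ y ∈ Lm, brk G x y = 0) ∧
  (∀ x ∈ L, ∃ p ∈ Lp, ∃ m ∈ Lm, ∃ z ∈ L0, x = p + m + z) ∧
  (∀ p ∈ Lp, ∀ m ∈ Lm, ∀ z ∈ L0, p + m + z = 0 → p = 0 ∧ m = 0 ∧ z = 0)

/-- A Jordan chain `x 0, …, x (n-1)` of `A` at `l` of length `n`. -/
def IsJordanChain (A : H →ₗ.[ℂ] H) (l : ℂ) (n : ℕ) (x : ℕ → A.domain) : Prop :=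
  0 < n ∧ (∀ i < n, (x i : H) ≠ 0) ∧ A (x 0) = l • ((x 0 : H)) ∧
  ∀ i, i + 1 < n → A (x (i + 1)) = l • ((x (i + 1) : H)) + (x i : H)

/-- A Jordan chain of `A` at `l` of infinite length. -/
def IsInfJordanChain (A : H →ₗ.[ℂ] H) (l : ℂ) (x : ℕ → A.domain) : Prop :=
  (∀ n, (x n : H) ≠ 0) ∧ A (x 0) = l • ((x 0 : H)) ∧
  ∀ n, A (x (n + 1)) = l • ((x (n + 1) : H)) + (x n : H)

/-- The algebraic eigenspace `L_λ(A) = ⋃ₙ ker (A − λ)ⁿ`. -/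
def algEig (A : H →ₗ.[ℂ] H) (l : ℂ) : Set H :=
  {x | ∃ n : ℕ, ∃ c : ℕ → H, c 0 = 0 ∧ c n = x ∧
    ∀ i < n, ∃ h : c (i + 1) ∈ A.domain, A ⟨c (i + 1), h⟩ = l • c (i + 1) + c i}

/-- The bounded operator `B` commutes with `A`, i.e. `BA ⊆ AB`. -/
def CommutesWith (B : H →L[ℂ] H) (A : H →ₗ.[ℂ] H) : Prop :=
  ∀ x : A.domain, ∃ h : B (x : H) ∈ A.domain, A ⟨B (x : H), h⟩ = B (A x)

/-- `R` is the (everywhere defined, bounded) resolvent of `A` at `μ`. -/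
def IsResolventOf (A : H →ₗ.[ℂ] H) (mu : ℂ) (R : H →L[ℂ] H) : Prop :=
  (∀ y : H, ∃ h : R y ∈ A.domain, A ⟨R y, h⟩ - mu • R y = y) ∧
  (∀ x : A.domain, R (A x - mu • (x : H)) = (x : H))

/-- The system `𝓜(I)` of all finite unions of bounded intervals whose closure
is contained in `I`. -/
def MSet (I : Set ℝ) : Set (Set ℝ) :=
  {D | ∃ F : Finset (Set ℝ),
    (∀ J ∈ F, J.OrdConnected ∧ Bornology.IsBounded J ∧ closure J ⊆ I) ∧ D = ⋃₀ ↑F}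

/-- The system `𝓜_S(I)`: elements of `𝓜(I)` whose boundary does not meet `S`. -/
def MSetS (I : Set ℝ) (S : Set ℝ) : Set (Set ℝ) :=
  {D | D ∈ MSet I ∧ frontier D ∩ S = ∅}

/-- `l` belongs to the resolvent set of the restriction `A|L` of `A`
to the (`A`-invariant) subspace `L`. -/
def InResolventRestr (A : H →ₗ.[ℂ] H) (L : Submodule ℂ H) (l : ℂ) : Prop :=
  (∀ x : A.domain, (x : H) ∈ L → A x - l • (x : H) ∈ L) ∧
  (∀ y ∈ L, ∃ x : A.domain, (x : H) ∈ L ∧ A x - l • (x : H) = y) ∧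
  ∃ c : ℝ, 0 < c ∧ ∀ x : A.domain, (x : H) ∈ L → c * ‖(x : H)‖ ≤ ‖A x - l • (x : H)‖

/-- The spectrum of the restriction `A|L`. -/
def specRestr (A : H →ₗ.[ℂ] H) (L : Submodule ℂ H) : Set ℂ :=
  {l | ¬ InResolventRestr A L l}

/-- The closure of `S ∩ dom A` with respect to the graph norm of `A`. -/
def graphClosure (A : H →ₗ.[ℂ] H) (S : Set H) : Set H :=
  {x | ∃ hx : x ∈ A.domain, ((x, A ⟨x, hx⟩) : H × H) ∈
    closure {p : H × H | ∃ hy : p.1 ∈ A.domain, p.1 ∈ S ∧ A ⟨p.1, hy⟩ = p.2}}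

/-- The sum `A + F` of `A` and a bounded operator `F`, with domain `dom A`. -/
def addCLM (A : H →ₗ.[ℂ] H) (F : H →L[ℂ] H) : H →ₗ.[ℂ] H :=
  ⟨A.domain, A.toFun + (F.toLinearMap.comp A.domain.subtype)⟩

/-- The composition `G ∘ A` as a partially defined operator with domain `dom A`. -/
def compCLM (G : H →L[ℂ] H) (A : H →ₗ.[ℂ] H) : H →ₗ.[ℂ] H :=
  ⟨A.domain, G.toLinearMap.comp A.toFun⟩

/-- A map `f` defined on `dom A` is `A`-compact: any sequence bounded in the graph
norm of `A` has a subsequence whose image under `f` converges. -/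
def IsACompact (A : H →ₗ.[ℂ] H) (f : A.domain → H) : Prop :=
  ∀ x : ℕ → A.domain, (∃ C : ℝ, ∀ n, ‖(x n : H)‖ + ‖A (x n)‖ ≤ C) →
    ∃ φ : ℕ → ℕ, StrictMono φ ∧ ∃ y : H, Tendsto (fun n => f (x (φ n))) atTop (𝓝 y)

/-- `(L, [·,·])` is a Hilbert space: `[·,·]` is positive definite on `L` and `L` is
complete with respect to the induced norm. -/
def IsHilbertWrt (G : H →L[ℂ] H) (L : Submodule ℂ H) : Prop :=
  IsPosSet G (L : Set H) ∧
  ∀ u : ℕ → H, (∀ n, u n ∈ L) →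
    (∀ ε : ℝ, 0 < ε → ∃ N, ∀ m ≥ N, ∀ n ≥ N, brkRe G (u m - u n) (u m - u n) < ε) →
    ∃ v ∈ L, Tendsto (fun n => brkRe G (u n - v) (u n - v)) atTop (𝓝 0)

/-- `(L, −[·,·])` is a Hilbert space. -/
def IsAntiHilbertWrt (G : H →L[ℂ] H) (L : Submodule ℂ H) : Prop :=
  IsNegSet G (L : Set H) ∧
  ∀ u : ℕ → H, (∀ n, u n ∈ L) →
    (∀ ε : ℝ, 0 < ε → ∃ N, ∀ m ≥ N, ∀ n ≥ N, -brkRe G (u m - u n) (u m - u n) < ε) →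
    ∃ v ∈ L, Tendsto (fun n => brkRe G (u n - v) (u n - v)) atTop (𝓝 0)


/-- The sequence `x` converges weakly to `0` in `H`. -/
def WeakNullSeq (x : ℕ → H) : Prop :=
  ∀ y : H, Tendsto (fun n => (inner ℂ y (x n) : ℂ)) atTop (𝓝 0)


lemma mem_kerAt' {A : H →ₗ.[ℂ] H} {l : ℂ} {x : H} :
    x ∈ kerAt A l ↔ ∃ hx : x ∈ A.domain, A ⟨x, hx⟩ = l • x := Iff.rfl

lemma kerAt_isClosed (A : H →ₗ.[ℂ] H) (hAc : A.IsClosed) (l : ℂ) :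
    IsClosed ((kerAt A l : Submodule ℂ H) : Set H) := by
  have h : ((kerAt A l : Submodule ℂ H) : Set H)
      = (fun x : H => (x, l • x)) ⁻¹' (A.graph : Set (H × H)) := by
    ext x
    constructor
    · rintro ⟨hx, hAx⟩
      exact A.mem_graph_iff.mpr ⟨⟨x, hx⟩, rfl, hAx⟩
    · intro h
      obtain ⟨y, hy1, hy2⟩ := A.mem_graph_iff.mp h
      subst hy1
      exact ⟨y.2, by simpa using hy2⟩
  rw [h]
  exact hAc.preimage (continuous_id.prodMk (continuous_const_smul l))

lemma brkRe_cont (G : H →L[ℂ] H) : Continuous (fun x => brkRe G x x) :=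
  Complex.continuous_re.comp ((G.continuous.inner continuous_id))

lemma brkRe_smul (G : H →L[ℂ] H) (c : ℝ) (x : H) :
    brkRe G ((c : ℂ) • x) ((c : ℂ) • x) = c ^ 2 * brkRe G x x := by
  simp only [brkRe, brk, _root_.map_smul, inner_smul_left, inner_smul_right, Complex.conj_ofReal]
  rw [← mul_assoc, ← Complex.ofReal_mul, Complex.re_ofReal_mul]
  ring

lemma brkRe_le (G : H →L[ℂ] H) (x : H) (hx : ‖x‖ = 1) : |brkRe G x x| ≤ ‖G‖ := by
  have h1 : ‖brk G x x‖ ≤ ‖G x‖ * ‖x‖ := norm_inner_le_norm _ _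
  have h2 : ‖G x‖ ≤ ‖G‖ * ‖x‖ := G.le_opNorm x
  calc |brkRe G x x| ≤ ‖brk G x x‖ := Complex.abs_re_le_norm _
    _ ≤ ‖G‖ := by rw [hx, mul_one] at h1 h2; exact h1.trans h2

lemma master (K : Submodule ℂ H) (hK : IsClosed (K : Set H))
    (M : Submodule ℂ H) (hM : FiniteDimensional ℂ (H ⧸ M))
    (q : H → ℝ) (hq_cont : Continuous q)
    (hq_hom : ∀ (c : ℝ) (x : H), q ((c : ℂ) • x) = c ^ 2 * q x)
    (hsmall : ∀ u : ℕ → H, (∀ n, ‖u n‖ = 1) → (∀ n, u n ∈ M) →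
      (∀ n, u n ∈ K) → ¬ (∀ n, q (u n) < 1 / (n + 1)) ) :
    ∃ L' : Submodule ℂ H, L' ≤ K ∧ IsClosed (L' : Set H) ∧
      (∃ δ : ℝ, 0 < δ ∧ ∀ x ∈ L', δ * ‖x‖ ^ 2 ≤ q x) ∧
      FiniteDimensional ℂ (↥K ⧸ L'.comap K.subtype) := by
  classical
  -- Step 1: uniform positivity of q on K ⊓ M
  have step1 : ∃ δ : ℝ, 0 < δ ∧ ∀ x ∈ K ⊓ M, δ * ‖x‖ ^ 2 ≤ q x := by
    by_contra hcon
    push_neg at hcon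
    have hexists : ∀ n : ℕ, ∃ u : H, u ∈ K ∧ u ∈ M ∧ ‖u‖ = 1 ∧ q u < 1 / (n + 1) := by
      intro n
      have hpos : (0 : ℝ) < 1 / (n + 1) := by positivity
      obtain ⟨z, hz, hqz⟩ := hcon (1 / (n + 1)) hpos
      have hz0 : z ≠ 0 := by
        rintro rfl
        simp only [norm_zero] at hqz
        have : q (0 : H) = 0 := by
          have := hq_hom 0 0
          simpa using this
        rw [this] at hqz
        simp at hqz
      have hnz : (0:ℝ) < ‖z‖ := norm_pos_iff.mpr hz0
      refine ⟨((‖z‖⁻¹ : ℝ) : ℂ) • z, K.smul_mem _ hz.1, M.smul_mem _ hz.2, ?_, ?_⟩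
      · rw [norm_smul]
        simp [norm_inv, hnz.ne']
      · rw [hq_hom]
        have h1 : ‖z‖⁻¹ ^ 2 * q z < ‖z‖⁻¹ ^ 2 * (1 / (n + 1) * ‖z‖ ^ 2) :=
          mul_lt_mul_of_pos_left hqz (by positivity)
        have h2 : ‖z‖⁻¹ ^ 2 * (1 / (n + 1) * ‖z‖ ^ 2) = 1 / ((n:ℝ) + 1) := by
          field_simp
        linarith
    choose u hu1 hu2 hu3 hu4 using hexists
    exact hsmall u hu3 hu2 hu1 hu4
  obtain ⟨δ, hδ, hδq⟩ := step1
  -- Step 2: take L' the closure of K ⊓ M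
  refine ⟨(K ⊓ M).topologicalClosure, Submodule.topologicalClosure_minimal _ inf_le_left hK,
    Submodule.isClosed_topologicalClosure _, ⟨δ, hδ, ?_⟩, ?_⟩
  · intro x hx
    have hclosed : IsClosed {x : H | δ * ‖x‖ ^ 2 ≤ q x} :=
      isClosed_le (by continuity) hq_cont
    have hsub : ((K ⊓ M).topologicalClosure : Set H) ⊆ {x : H | δ * ‖x‖ ^ 2 ≤ q x} := by
      rw [Submodule.topologicalClosure_coe]
      exact closure_minimal (fun y hy => hδq y hy) hclosed
    exact hsub hx
  · -- finite codimension
    set f : ↥K →ₗ[ℂ] H ⧸ M := M.mkQ.comp K.subtype with hf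
    have hker : LinearMap.ker f = (K ⊓ M).comap K.subtype := by
      rw [Submodule.comap_inf, Submodule.comap_subtype_self, top_inf_eq]
      ext x
      simp [hf, LinearMap.mem_ker, Submodule.Quotient.mk_eq_zero]
    have hfd : FiniteDimensional ℂ (↥K ⧸ LinearMap.ker f) := by
      haveI : FiniteDimensional ℂ (LinearMap.range f) := inferInstance
      exact LinearEquiv.finiteDimensional f.quotKerEquivRange.symm
    have hle : LinearMap.ker f ≤ ((K ⊓ M).topologicalClosure).comap K.subtype := by
      rw [hker]
      exact Submodule.comap_mono (Submodule.le_topologicalClosure _)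
    set N₂ := ((K ⊓ M).topologicalClosure).comap K.subtype
    have hsurj : Function.Surjective
        (Submodule.mapQ (LinearMap.ker f) N₂ LinearMap.id hle) := by
      intro y
      obtain ⟨x, rfl⟩ := N₂.mkQ_surjective y
      exact ⟨(LinearMap.ker f).mkQ x, by simp [Submodule.mapQ_apply]⟩
    exact Module.Finite.of_surjective _ hsurj

/-- For finite `λ ∈ σ_{π+}(A)` (`σ_{π−}(A)`), the eigenspace
`ker (A − λ)` is an Almost Pontryagin space with finite rank of non-positivity
(non-negativity). -/
theorem statement_5 [CompleteSpace H] (G : H →L[ℂ] H) (hG : IsSelfAdjoint G)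
    (A : H →ₗ.[ℂ] H) (hAc : A.IsClosed) (hAd : Dense (A.domain : Set H)) (l : ℂ) :
    (sigmaPiPlusAt G A l →
      ∃ L' : Submodule ℂ H, L' ≤ kerAt A l ∧ IsClosed (L' : Set H) ∧ IsUnifPos G L' ∧
        FiniteDimensional ℂ (↥(kerAt A l) ⧸ L'.comap (kerAt A l).subtype)) ∧
    (sigmaPiMinusAt G A l →
      ∃ L' : Submodule ℂ H, L' ≤ kerAt A l ∧ IsClosed (L' : Set H) ∧ IsUnifNeg G L' ∧
        FiniteDimensional ℂ (↥(kerAt A l) ⧸ L'.comap (kerAt A l).subtype)) := by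
  constructor
  · rintro ⟨-, M, hMfc, hcond⟩
    exact master (kerAt A l) (kerAt_isClosed A hAc l) M hMfc
      (fun x => brkRe G x x) (brkRe_cont G) (brkRe_smul G)
      (by
        intro u hn hm hk hlt
        set x : ℕ → A.domain := fun n => ⟨u n, (hk n).choose⟩ with hx
        have hAx : ∀ n, A (x n) = l • u n := fun n => (hk n).choose_spec
        have htend : Tendsto (fun n => A (x n) - l • ((x n : H))) atTop (𝓝 0) := by
          have : (fun n => A (x n) - l • ((x n : H))) = fun _ => (0 : H) := by
            funext n
            rw [show ((x n : H)) = u n from rfl, hAx n, sub_self]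
          rw [this]
          exact tendsto_const_nhds
        have hlim := hcond x (fun n => hm n) ⟨hn, htend⟩
        set v : ℕ → ℝ := fun n => brkRe G (u n) (u n) with hv
        have hlim' : 0 < atTop.liminf v := hlim
        have hb : IsBoundedUnder (· ≤ ·) atTop v :=
          isBoundedUnder_of ⟨‖G‖, fun n => (abs_le.mp (brkRe_le G (u n) (hn n))).2⟩
        set s := atTop.liminf v with hs
        have hb' : IsBoundedUnder (· ≥ ·) atTop v :=
          isBoundedUnder_of ⟨-‖G‖, fun n => neg_le_of_abs_le (brkRe_le G (u n) (hn n))⟩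
        have hev : ∀ᶠ n in atTop, s / 2 < v n :=
          eventually_lt_of_lt_liminf (by linarith) hb'
        obtain ⟨n₀, hn₀⟩ := exists_nat_one_div_lt (show (0:ℝ) < s / 2 by linarith)
        obtain ⟨n, h1, h2⟩ := (hev.and (eventually_ge_atTop n₀)).exists
        have h3 : (1:ℝ) / (n + 1) ≤ 1 / (n₀ + 1) := by
          gcongr <;> exact_mod_cast h2
        have h4 := hlt n
        linarith)
  · rintro ⟨-, M, hMfc, hcond⟩
    exact master (kerAt A l) (kerAt_isClosed A hAc l) M hMfc
      (fun x => -brkRe G x x) (brkRe_cont G).neg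
      (by
        intro c x
        show -brkRe G ((c:ℂ) • x) ((c:ℂ) • x) = c ^ 2 * -brkRe G x x
        rw [brkRe_smul]; ring)
      (by
        intro u hn hm hk hlt
        set x : ℕ → A.domain := fun n => ⟨u n, (hk n).choose⟩ with hx
        have hAx : ∀ n, A (x n) = l • u n := fun n => (hk n).choose_spec
        have htend : Tendsto (fun n => A (x n) - l • ((x n : H))) atTop (𝓝 0) := by
          have : (fun n => A (x n) - l • ((x n : H))) = fun _ => (0 : H) := by
            funext n
            rw [show ((x n : H)) = u n from rfl, hAx n, sub_self]
          rw [this]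
          exact tendsto_const_nhds
        have hlim := hcond x (fun n => hm n) ⟨hn, htend⟩
        set v : ℕ → ℝ := fun n => brkRe G (u n) (u n) with hv
        have hlim' : atTop.limsup v < 0 := hlim
        have hb : IsBoundedUnder (· ≤ ·) atTop v :=
          isBoundedUnder_of ⟨‖G‖, fun n => (abs_le.mp (brkRe_le G (u n) (hn n))).2⟩
        set s := atTop.limsup v with hs
        have hev : ∀ᶠ n in atTop, v n < s / 2 :=
          eventually_lt_of_limsup_lt (by linarith) hb
        obtain ⟨n₀, hn₀⟩ := exists_nat_one_div_lt (show (0:ℝ) < -s / 2 by linarith)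
        obtain ⟨n, h1, h2⟩ := (hev.and (eventually_ge_atTop n₀)).exists
        have h3 : (1:ℝ) / (n + 1) ≤ 1 / (n₀ + 1) := by
          gcongr <;> exact_mod_cast h2
        have h4 := hlt n
        simp only [hv] at *
        linarith)


end Paper
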